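/- Suppose the parameters {p_k}_{0≤k≤m} do not fall into one of the following three cases: (a) p_k = 0 for all 0 ≤ k ≤ m; (b) p_k = 1 for all 0 ≤ k ≤ m; (c) m = 1, p_0 = 1, p_1 = 0. Suppose z ∈ (0,1) ∩ Z_P. Then there exist integers k_1 and k_2 with k_1 < 2mz < k_2 and, for every δ > 0, a constant c > 0 depending only on δ and the parameters {p_k} such that on the event {x_n ∈ (δ, 1−δ)} one has P(X_{n+1} − X_n = k_1 | F_n) ≥ c and P(X_{n+1} − X_n = k_2 | F_n) ≥ c. -/

import Mathlib

open MeasureTheory ProbabilityTheory Filter Set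

noncomputable section

/-- The polynomial `P(z) = (1/2) ∑_{k=0}^m C(m,k) z^k (1-z)^{m-k} (p_k - k/m)`. -/
def polyP (m : ℕ) (p : ℕ → ℝ) (z : ℝ) : ℝ :=
  (1 / 2) * ∑ k ∈ Finset.range (m + 1),
    (m.choose k : ℝ) * z ^ k * (1 - z) ^ (m - k) * (p k - (k : ℝ) / m)

/-- The zero set `Z_P = {z ∈ [0,1] : P(z) = 0}`. -/
def zeroSetP (m : ℕ) (p : ℕ → ℝ) : Set ℝ :=
  {z ∈ Set.Icc (0 : ℝ) 1 | polyP m p z = 0}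

/-- The two-type preferential attachment process with `m` edges per new node and type
adoption parameters `p 0, …, p m`, defined on a probability space `(Ω, μ)` with filtration
`F`.  `A n` is the number of red nodes and `X n` the sum of the degrees of red nodes at time
`n`; the transition probabilities given `F n` are those of the model: a number `k` of red
neighbours is drawn from the `Binomial(m, x_n)` distribution, and then the new node is red
with probability `p k` (adding `1` to the red nodes and `k + m` to the red degrees) and blue
with probability `1 - p k` (adding `k` to the red degrees). -/
structure PAProcess (Ω : Type) [MeasurableSpace Ω] where
  μ : Measure Ω
  isProb : IsProbabilityMeasure μ
  m : ℕ
  hm : 1 ≤ m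
  p : ℕ → ℝ
  hp : ∀ k ≤ m, p k ∈ Set.Icc (0 : ℝ) 1
  A : ℕ → Ω → ℕ
  X : ℕ → Ω → ℕ
  F : Filtration ℕ ‹MeasurableSpace Ω›
  A0 : ℕ
  B0 : ℕ
  X0 : ℕ
  Y0 : ℕ
  hA0 : ∀ ω, A 0 ω = A0
  hX0 : ∀ ω, X 0 ω = X0
  adaptedA : ∀ n, Measurable[F n] (A n)
  adaptedX : ∀ n, Measurable[F n] (X n)
  hXle : ∀ n ω, X n ω ≤ X0 + Y0 + 2 * m * n
  step_red : ∀ n, ∀ k ≤ m,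
    μ[Set.indicator {ω | A (n + 1) ω = A n ω + 1 ∧ X (n + 1) ω = X n ω + k + m}
        (fun _ => (1 : ℝ)) | F n]
      =ᵐ[μ] fun ω => (m.choose k : ℝ) *
        ((X n ω : ℝ) / ((X0 : ℝ) + Y0 + 2 * m * n)) ^ k *
        (1 - (X n ω : ℝ) / ((X0 : ℝ) + Y0 + 2 * m * n)) ^ (m - k) * p k
  step_blue : ∀ n, ∀ k ≤ m,
    μ[Set.indicator {ω | A (n + 1) ω = A n ω ∧ X (n + 1) ω = X n ω + k}
        (fun _ => (1 : ℝ)) | F n]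
      =ᵐ[μ] fun ω => (m.choose k : ℝ) *
        ((X n ω : ℝ) / ((X0 : ℝ) + Y0 + 2 * m * n)) ^ k *
        (1 - (X n ω : ℝ) / ((X0 : ℝ) + Y0 + 2 * m * n)) ^ (m - k) * (1 - p k)

namespace PAProcess

variable {Ω : Type} [MeasurableSpace Ω] (P : PAProcess Ω)

/-- Total degree `S_n = S_0 + 2mn`. -/
def S (n : ℕ) : ℕ := P.X0 + P.Y0 + 2 * P.m * n

/-- Normalized red degree `x_n = X_n / S_n`. -/
def x (n : ℕ) (ω : Ω) : ℝ := (P.X n ω : ℝ) / (P.S n : ℝ)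

/-- Normalized red node count `a_n = A_n / (A_0 + B_0 + n)`. -/
def a (n : ℕ) (ω : Ω) : ℝ := (P.A n ω : ℝ) / ((P.A0 : ℝ) + P.B0 + n)

/-- The polynomial `P` of the process. -/
def poly : ℝ → ℝ := polyP P.m P.p

/-- The zero set `Z_P` of the process. -/
def Zp : Set ℝ := zeroSetP P.m P.p

end PAProcess

/-! Freeze `x_n = z` and write `B_k(z)` for the Bernstein weights. One step raises `X` by `k`
(blue newcomer with `k` red neighbours) with probability `B_k(z) (1 - p_k)` and by `k + m`
(red newcomer) with probability `B_k(z) p_k`, so its mean is `2mz + 2m P(z)`. At a zero of `P`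
the increment therefore has mean exactly `2mz`, and unless it is almost surely constant it
takes, with positive probability, one value below `2mz` and one above. It is constant only in
case (c): every `k ≤ m` would need `k = 2mz` or `k + m = 2mz`. On `{x_n ∈ (δ, 1 - δ)}` every
Bernstein weight is at least `δ^m`, which makes the lower bound uniform in `n`. -/

open Finset

theorem eval_bernsteinPolynomial (m k : ℕ) (z : ℝ) :
    (bernsteinPolynomial ℝ m k).eval z = m.choose k * z ^ k * (1 - z) ^ (m - k) := by
  simp [bernsteinPolynomial]

theorem sum_eval_bernsteinPolynomial (m : ℕ) (z : ℝ) :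
    ∑ k ∈ range (m + 1), (bernsteinPolynomial ℝ m k).eval z = 1 := by
  simpa [Polynomial.eval_finsetSum] using
    congrArg (Polynomial.eval z) (bernsteinPolynomial.sum ℝ m)

theorem sum_mul_eval_bernsteinPolynomial (m : ℕ) (z : ℝ) :
    ∑ k ∈ range (m + 1), (k : ℝ) * (bernsteinPolynomial ℝ m k).eval z = m * z := by
  simpa [Polynomial.eval_finsetSum] using
    congrArg (Polynomial.eval z) (bernsteinPolynomial.sum_smul ℝ m)

theorem eval_bernsteinPolynomial_pos {m k : ℕ} (hk : k ≤ m) {z : ℝ} (hz : z ∈ Set.Ioo 0 1) :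
    0 < (bernsteinPolynomial ℝ m k).eval z := by
  have hchoose : (0 : ℝ) < m.choose k := by exact_mod_cast Nat.choose_pos hk
  rw [eval_bernsteinPolynomial]
  exact mul_pos (mul_pos hchoose (pow_pos hz.1 _)) (pow_pos (sub_pos.2 hz.2) _)

theorem pow_le_eval_bernsteinPolynomial {m k : ℕ} (hk : k ≤ m) {δ z : ℝ} (hδ : 0 ≤ δ)
    (hz : δ ≤ z) (hz' : δ ≤ 1 - z) : δ ^ m ≤ (bernsteinPolynomial ℝ m k).eval z := by
  have hchoose : (1 : ℝ) ≤ m.choose k := by exact_mod_cast Nat.choose_pos hk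
  have hz₀ : 0 ≤ z := hδ.trans hz
  have hz₁ : 0 ≤ 1 - z := hδ.trans hz'
  rw [eval_bernsteinPolynomial, mul_assoc]
  calc δ ^ m = δ ^ k * δ ^ (m - k) := by rw [← pow_add, Nat.add_sub_cancel' hk]
    _ ≤ z ^ k * (1 - z) ^ (m - k) := by gcongr
    _ ≤ m.choose k * (z ^ k * (1 - z) ^ (m - k)) :=
      le_mul_of_one_le_left (by positivity) hchoose

theorem sum_eval_bernsteinPolynomial_mul_drift {m : ℕ} (hm : m ≠ 0) (p : ℕ → ℝ) (z : ℝ) :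
    ∑ k ∈ range (m + 1), (bernsteinPolynomial ℝ m k).eval z * (k + m * p k - 2 * m * z) =
      2 * m * polyP m p z := by
  have hterm : ∀ k ∈ range (m + 1),
      (bernsteinPolynomial ℝ m k).eval z * (k + m * p k - 2 * m * z) =
        2 * m * (1 / 2 * (m.choose k * z ^ k * (1 - z) ^ (m - k) * (p k - k / m))) +
          2 * (k * (bernsteinPolynomial ℝ m k).eval z) -
          2 * m * z * (bernsteinPolynomial ℝ m k).eval z := by
    intro k _
    rw [eval_bernsteinPolynomial]
    field_simp
    ring
  rw [sum_congr rfl hterm, sum_sub_distrib, sum_add_distrib, ← mul_sum, ← mul_sum, ← mul_sum,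
    ← mul_sum, sum_mul_eval_bernsteinPolynomial, sum_eval_bernsteinPolynomial, polyP]
  ring

theorem exists_pos_mul_neg_of_sum_mul_eq_zero {ι R : Type*} [CommRing R] [LinearOrder R]
    [IsStrictOrderedRing R] {s : Finset ι} {w f : ι → R} (hw : ∀ i ∈ s, 0 ≤ w i)
    (hsum : ∑ i ∈ s, w i * f i = 0) (hne : ∃ i ∈ s, 0 < w i ∧ f i ≠ 0) :
    ∃ i ∈ s, 0 < w i ∧ f i < 0 := by
  by_contra! hf
  obtain ⟨i, hi, hwi, hfi⟩ := hne
  have hterm : ∀ j ∈ s, 0 ≤ w j * f j := by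
    intro j hj
    rcases (hw j hj).eq_or_lt with hwj | hwj
    · simp [← hwj]
    · exact mul_nonneg hwj.le (hf j hj hwj)
  have : 0 < ∑ j ∈ s, w j * f j :=
    sum_pos' hterm ⟨i, hi, mul_pos hwi ((hf i hi hwi).lt_of_ne' hfi)⟩
  exact this.ne' hsum

-- A step's outcome is a pair `(k, red)`: the newcomer has `k` red neighbours and is red iff `red`.
def colorProb (p : ℕ → ℝ) : ℕ × Bool → ℝ
  | (k, true) => p k
  | (k, false) => 1 - p k

def degreeIncrement (m : ℕ) : ℕ × Bool → ℕ
  | (k, true) => k + m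
  | (k, false) => k

def stepOutcomes (m : ℕ) : Finset (ℕ × Bool) := range (m + 1) ×ˢ (univ : Finset Bool)

theorem mem_stepOutcomes {m : ℕ} {o : ℕ × Bool} : o ∈ stepOutcomes m ↔ o.1 ≤ m := by
  simp [stepOutcomes]

theorem sum_stepOutcomes_drift {m : ℕ} (hm : m ≠ 0) (p : ℕ → ℝ) (z : ℝ) :
    ∑ o ∈ stepOutcomes m, (bernsteinPolynomial ℝ m o.1).eval z * colorProb p o *
      (degreeIncrement m o - 2 * m * z) = 2 * m * polyP m p z := by
  rw [stepOutcomes, sum_product, ← sum_eval_bernsteinPolynomial_mul_drift hm]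
  refine sum_congr rfl fun k _ => ?_
  simp only [Fintype.sum_bool, colorProb, degreeIncrement]
  push_cast
  ring

theorem exists_stepOutcome_ne {m : ℕ} (hm : 1 ≤ m) {p : ℕ → ℝ}
    (hp : ∀ k ≤ m, p k ∈ Set.Icc (0 : ℝ) 1) (hc : ¬ (m = 1 ∧ p 0 = 1 ∧ p 1 = 0))
    {z : ℝ} (hz : z ∈ Set.Ioo 0 1) :
    ∃ o ∈ stepOutcomes m, 0 < colorProb p o ∧ (degreeIncrement m o : ℝ) ≠ 2 * m * z := by
  by_contra! h
  have hred : ∀ k ≤ m, 0 < p k → (k : ℝ) + m = 2 * m * z := fun k hk hpk => by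
    exact_mod_cast h (k, true) (mem_stepOutcomes.2 hk) hpk
  have hblue : ∀ k ≤ m, 0 < 1 - p k → (k : ℝ) = 2 * m * z := fun k hk hpk => by
    exact_mod_cast h (k, false) (mem_stepOutcomes.2 hk) hpk
  have hboth : ∀ k ≤ m, (k : ℝ) + m = 2 * m * z ∨ (k : ℝ) = 2 * m * z := by
    intro k hk
    rcases lt_or_ge 0 (p k) with hpk | hpk
    · exact .inl (hred k hk hpk)
    · exact .inr (hblue k hk (by linarith))
  have hz₀ := hz.1
  rcases hm.eq_or_lt with rfl | hm₂
  · have hp₀ : p 0 = 1 := by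
      by_contra hp₀
      have := hblue 0 zero_le_one (sub_pos.2 (lt_of_le_of_ne (hp 0 zero_le_one).2 hp₀))
      push_cast at this; linarith
    have hz : z = 1 / 2 := by
      have := hred 0 (by norm_num) (by linarith); push_cast at this; linarith
    have hp₁ : p 1 = 0 := by
      by_contra hp₁
      have := hred 1 le_rfl (lt_of_le_of_ne (hp 1 le_rfl).1 (Ne.symm hp₁))
      push_cast at this; linarith
    exact hc ⟨rfl, hp₀, hp₁⟩
  · have hm₂' : (2 : ℝ) ≤ m := by exact_mod_cast hm₂
    have h₀ := hboth 0 (by omega)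
    have h₁ := hboth 1 (by omega)
    have h₂ := hboth 2 (by omega)
    push_cast at h₀ h₁ h₂
    rcases h₀ with h₀ | h₀ <;> rcases h₁ with h₁ | h₁ <;> rcases h₂ with h₂ | h₂ <;>
      linarith

theorem exists_stepOutcome_lt_and_gt {m : ℕ} (hm : 1 ≤ m) {p : ℕ → ℝ}
    (hp : ∀ k ≤ m, p k ∈ Set.Icc (0 : ℝ) 1) (hc : ¬ (m = 1 ∧ p 0 = 1 ∧ p 1 = 0))
    {z : ℝ} (hz : z ∈ Set.Ioo 0 1) (hP : polyP m p z = 0) :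
    (∃ o ∈ stepOutcomes m, 0 < colorProb p o ∧ (degreeIncrement m o : ℝ) < 2 * m * z) ∧
      ∃ o ∈ stepOutcomes m, 0 < colorProb p o ∧ 2 * m * z < degreeIncrement m o := by
  set w : ℕ × Bool → ℝ := fun o => (bernsteinPolynomial ℝ m o.1).eval z * colorProb p o
  have hB : ∀ o ∈ stepOutcomes m, 0 < (bernsteinPolynomial ℝ m o.1).eval z := fun o ho =>
    eval_bernsteinPolynomial_pos (mem_stepOutcomes.1 ho) hz
  have hw : ∀ o ∈ stepOutcomes m, 0 ≤ w o := by
    rintro ⟨k, _ | _⟩ ho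
    all_goals
      have hpk := hp k (mem_stepOutcomes.1 ho)
      exact mul_nonneg (hB _ ho).le (by simp only [colorProb]; linarith [hpk.1, hpk.2])
  have hw_pos : ∀ o ∈ stepOutcomes m, 0 < w o ↔ 0 < colorProb p o := fun o ho =>
    mul_pos_iff_of_pos_left (hB o ho)
  have hsum : ∑ o ∈ stepOutcomes m, w o * (degreeIncrement m o - 2 * m * z) = 0 := by
    rw [sum_stepOutcomes_drift (by omega), hP, mul_zero]
  obtain ⟨o, ho, hpos, hne⟩ := exists_stepOutcome_ne hm hp hc hz
  constructor
  · obtain ⟨o', ho', hwo', hlt⟩ := exists_pos_mul_neg_of_sum_mul_eq_zero hw hsum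
      ⟨o, ho, (hw_pos o ho).2 hpos, sub_ne_zero.2 hne⟩
    exact ⟨o', ho', (hw_pos o' ho').1 hwo', sub_neg.1 hlt⟩
  · obtain ⟨o', ho', hwo', hlt⟩ := exists_pos_mul_neg_of_sum_mul_eq_zero hw
      (f := fun o => 2 * m * z - degreeIncrement m o)
      (by rw [← neg_eq_zero, ← sum_neg_distrib, ← hsum]
          exact sum_congr rfl fun o _ => by ring)
      ⟨o, ho, (hw_pos o ho).2 hpos, sub_ne_zero.2 hne.symm⟩
    exact ⟨o', ho', (hw_pos o' ho').1 hwo', sub_neg.1 hlt⟩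

theorem condExp_indicator_one_mono {Ω : Type*} {m m₀ : MeasurableSpace Ω} {μ : Measure Ω}
    [IsFiniteMeasure μ] {s t : Set Ω} (hs : MeasurableSet s) (ht : MeasurableSet t)
    (hst : s ⊆ t) :
    μ[s.indicator (fun _ => (1 : ℝ)) | m] ≤ᵐ[μ] μ[t.indicator (fun _ => (1 : ℝ)) | m] :=
  condExp_mono ((integrable_const 1).indicator hs) ((integrable_const 1).indicator ht)
    (.of_forall (indicator_le_indicator_of_subset hst fun _ => zero_le_one))

namespace PAProcess

variable {Ω : Type} [MeasurableSpace Ω] (P : PAProcess Ω)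

theorem measurable_A (n : ℕ) : Measurable (P.A n) := (P.adaptedA n).mono (P.F.le n) le_rfl

theorem measurable_X (n : ℕ) : Measurable (P.X n) := (P.adaptedX n).mono (P.F.le n) le_rfl

theorem div_totalDegree_eq_x (n : ℕ) (ω : Ω) :
    (P.X n ω : ℝ) / ((P.X0 : ℝ) + P.Y0 + 2 * P.m * n) = P.x n ω := by
  simp [x, S]

theorem measurableSet_X_succ_eq_add (n j : ℕ) :
    MeasurableSet {ω | P.X (n + 1) ω = P.X n ω + j} :=
  measurableSet_eq_fun (P.measurable_X _) ((P.measurable_X n).add_const _)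

theorem eval_bernsteinPolynomial_mul_colorProb_le_condExp (n : ℕ) {k : ℕ} (hk : k ≤ P.m)
    (red : Bool) :
    ∀ᵐ ω ∂P.μ, (bernsteinPolynomial ℝ P.m k).eval (P.x n ω) * colorProb P.p (k, red) ≤
      P.μ[{ω' | P.X (n + 1) ω' = P.X n ω' + degreeIncrement P.m (k, red)}.indicator
        (fun _ => (1 : ℝ)) | P.F n] ω := by
  have := P.isProb
  cases red
  · have hs : MeasurableSet {ω | P.A (n + 1) ω = P.A n ω ∧ P.X (n + 1) ω = P.X n ω + k} :=
      (measurableSet_eq_fun (P.measurable_A _) (P.measurable_A n)).inter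
        (P.measurableSet_X_succ_eq_add n k)
    filter_upwards [P.step_blue n k hk, condExp_indicator_one_mono (m := P.F n) hs
      (P.measurableSet_X_succ_eq_add n k) fun ω h => h.2] with ω hstep hmono
    rw [hstep] at hmono
    simpa only [colorProb, degreeIncrement, eval_bernsteinPolynomial, div_totalDegree_eq_x]
      using hmono
  · have hs : MeasurableSet
        {ω | P.A (n + 1) ω = P.A n ω + 1 ∧ P.X (n + 1) ω = P.X n ω + (k + P.m)} :=
      (measurableSet_eq_fun (P.measurable_A _) ((P.measurable_A n).add_const _)).inter
        (P.measurableSet_X_succ_eq_add n _)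
    filter_upwards [P.step_red n k hk, condExp_indicator_one_mono (m := P.F n) hs
      (P.measurableSet_X_succ_eq_add n _) fun ω h => h.2] with ω hstep hmono
    simp only [Nat.add_assoc] at hstep
    rw [hstep] at hmono
    simpa only [colorProb, degreeIncrement, eval_bernsteinPolynomial, div_totalDegree_eq_x]
      using hmono

theorem exists_pos_le_condExp_of_colorProb_pos {o : ℕ × Bool} (ho : o ∈ stepOutcomes P.m)
    (hpos : 0 < colorProb P.p o) {δ : ℝ} (hδ : 0 < δ) :
    ∃ c > (0 : ℝ), ∀ n : ℕ, ∀ᵐ ω ∂P.μ, P.x n ω ∈ Set.Ioo δ (1 - δ) →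
      c ≤ P.μ[{ω' | P.X (n + 1) ω' = P.X n ω' + degreeIncrement P.m o}.indicator
        (fun _ => (1 : ℝ)) | P.F n] ω := by
  refine ⟨δ ^ P.m * colorProb P.p o, by positivity, fun n => ?_⟩
  filter_upwards [P.eval_bernsteinPolynomial_mul_colorProb_le_condExp n
    (mem_stepOutcomes.1 ho) o.2] with ω hle hx
  refine le_trans ?_ hle
  gcongr
  exact pow_le_eval_bernsteinPolynomial (mem_stepOutcomes.1 ho) hδ.le hx.1.le
    (by linarith [hx.2])

end PAProcess

theorem exists_conditional_probability_lower_bound_general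
    {Ω : Type} [MeasurableSpace Ω] (P : PAProcess Ω)
    (hc : ¬ (P.m = 1 ∧ P.p 0 = 1 ∧ P.p 1 = 0))
    (z : ℝ) (hz : z ∈ Set.Ioo (0 : ℝ) 1 ∩ P.Zp) :
    ∃ k₁ k₂ : ℕ, (k₁ : ℝ) < 2 * P.m * z ∧ 2 * P.m * z < (k₂ : ℝ) ∧
      ∀ δ > (0 : ℝ), ∃ c > (0 : ℝ), ∀ n : ℕ, ∀ᵐ ω ∂P.μ,
        P.x n ω ∈ Set.Ioo δ (1 - δ) →
          c ≤ (P.μ[Set.indicator {ω' | P.X (n + 1) ω' = P.X n ω' + k₁}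
                (fun _ => (1 : ℝ)) | P.F n]) ω ∧
          c ≤ (P.μ[Set.indicator {ω' | P.X (n + 1) ω' = P.X n ω' + k₂}
                (fun _ => (1 : ℝ)) | P.F n]) ω := by
  obtain ⟨⟨o₁, ho₁, hpos₁, hlt⟩, ⟨o₂, ho₂, hpos₂, hgt⟩⟩ :=
    exists_stepOutcome_lt_and_gt P.hm P.hp hc hz.1 hz.2.2
  refine ⟨degreeIncrement P.m o₁, degreeIncrement P.m o₂, hlt, hgt, fun δ hδ => ?_⟩
  obtain ⟨c₁, hc₁, h₁⟩ := P.exists_pos_le_condExp_of_colorProb_pos ho₁ hpos₁ hδ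
  obtain ⟨c₂, hc₂, h₂⟩ := P.exists_pos_le_condExp_of_colorProb_pos ho₂ hpos₂ hδ
  refine ⟨min c₁ c₂, lt_min hc₁ hc₂, fun n => ?_⟩
  filter_upwards [h₁ n, h₂ n] with ω hω₁ hω₂ hx
  exact ⟨(min_le_left _ _).trans (hω₁ hx), (min_le_right _ _).trans (hω₂ hx)⟩

/-- **Noise lower bound.** Suppose the parameters `{p_k}` do not fall into one of the
three cases: (a) `p_k = 0` for all `k`; (b) `p_k = 1` for all `k`; (c) `m = 1, p_0 = 1,
p_1 = 0`.  Suppose `z ∈ (0,1) ∩ Z_P`.  Then there exist integers `k₁ < 2mz < k₂` such that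
for every `δ > 0` there is a constant `c > 0` (depending only on `δ` and the parameters)
such that on the event `{x_n ∈ (δ, 1−δ)}` one has
`P(X_{n+1} − X_n = k₁ | F_n) ≥ c` and `P(X_{n+1} − X_n = k₂ | F_n) ≥ c`. -/
theorem exists_conditional_probability_lower_bound
    {Ω : Type} [MeasurableSpace Ω] (P : PAProcess Ω)
    (ha : ¬ (∀ k ≤ P.m, P.p k = 0))
    (hb : ¬ (∀ k ≤ P.m, P.p k = 1))
    (hc : ¬ (P.m = 1 ∧ P.p 0 = 1 ∧ P.p 1 = 0))
    (z : ℝ) (hz : z ∈ Set.Ioo (0 : ℝ) 1 ∩ P.Zp) :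
    ∃ k₁ k₂ : ℕ, (k₁ : ℝ) < 2 * P.m * z ∧ 2 * P.m * z < (k₂ : ℝ) ∧
      ∀ δ > (0 : ℝ), ∃ c > (0 : ℝ), ∀ n : ℕ, ∀ᵐ ω ∂P.μ,
        P.x n ω ∈ Set.Ioo δ (1 - δ) →
          c ≤ (P.μ[Set.indicator {ω' | P.X (n + 1) ω' = P.X n ω' + k₁}
                (fun _ => (1 : ℝ)) | P.F n]) ω ∧
          c ≤ (P.μ[Set.indicator {ω' | P.X (n + 1) ω' = P.X n ω' + k₂}
                (fun _ => (1 : ℝ)) | P.F n]) ω :=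
  exists_conditional_probability_lower_bound_general P hc z hz
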